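/- Convolution integral estimate: if β ≥ γ ≥ 0 and β + γ > 1, then there is a constant C = C(β,γ) such that for all real a₁, a₂, ∫_ℝ ⟨x−a₁⟩^{−β} ⟨x−a₂⟩^{−γ} dx ≤ C ⟨a₁−a₂⟩^{−γ} φ_β(a₁−a₂), where φ_β(a) = 1 if β > 1, φ_β(a) = log(1+⟨a⟩) if β = 1, and φ_β(a) = ⟨a⟩^{1−β} if β < 1. -/

import Mathlib

open MeasureTheory
open scoped ENNReal

noncomputable section

/-- The Japanese bracket `⟨x⟩ = (1+x²)^{1/2}`. -/
def jap (x : ℝ) : ℝ := Real.sqrt (1 + x ^ 2)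

/-!
Write `u = x - a₁`, `v = x - a₂` and `d = a₁ - a₂ = v - u`. If `|u| > 2|d|` then `⟨v⟩ ≳ ⟨u⟩`, so
the integrand is `≲ ⟨u⟩^{-(β+γ)}`, whose integral over `|u| > 2|d|` is `≲ ⟨d⟩^{1-β-γ}`. Otherwise
`|u| ≤ 2|d|`, and either `|v| ≳ |d|`, so that `⟨v⟩^{-γ} ≲ ⟨d⟩^{-γ}`, or `v` is close to `0`, so that
`⟨u⟩ ≳ ⟨d⟩ ≥ ⟨v⟩` and, as `γ ≤ β`, `⟨u⟩^{-β} ⟨v⟩^{-γ} ≲ ⟨d⟩^{-β} ⟨v⟩^{-γ} ≤ ⟨d⟩^{-γ} ⟨v⟩^{-β}`.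
In both cases the integrand is `≲ ⟨d⟩^{-γ} ⟨w⟩^{-β}` with `w ∈ {u, v}` and `|w| ≤ 2|d|`, and
`∫_{|w| ≤ R} ⟨w⟩^{-β} dw ≲ ∫_1^{R+1} t^{-β} dt ≲ φ_β`.
-/

open Set

lemma jap_sq (x : ℝ) : jap x ^ 2 = 1 + x ^ 2 := Real.sq_sqrt (by positivity)

lemma one_le_jap (x : ℝ) : 1 ≤ jap x := Real.one_le_sqrt.mpr (by nlinarith)

lemma jap_pos (x : ℝ) : 0 < jap x := one_pos.trans_le (one_le_jap x)

lemma abs_le_jap (x : ℝ) : |x| ≤ jap x := by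
  rw [← Real.sqrt_sq_eq_abs]; exact Real.sqrt_le_sqrt (by linarith)

lemma jap_le_one_add_abs (x : ℝ) : jap x ≤ 1 + |x| :=
  Real.sqrt_le_iff.mpr ⟨by positivity, by nlinarith [sq_abs x, abs_nonneg x]⟩

lemma jap_neg (x : ℝ) : jap (-x) = jap x := by simp [jap]

lemma jap_le_mul_jap {x y c : ℝ} (hc : 1 ≤ c) (h : |x| ≤ c * |y|) : jap x ≤ c * jap y := by
  refine Real.sqrt_le_iff.mpr ⟨by nlinarith [jap_pos y], ?_⟩
  rw [mul_pow, jap_sq]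
  nlinarith [sq_abs x, sq_abs y, mul_le_mul h h (abs_nonneg x) (by positivity)]

lemma rpow_neg_le_rpow_mul_rpow_neg {x y c t : ℝ} (hx : 0 < x) (hc : 0 < c) (h : x ≤ c * y)
    (ht : 0 ≤ t) : y ^ (-t) ≤ c ^ t * x ^ (-t) := by
  have hxc : 0 < x / c := div_pos hx hc
  calc y ^ (-t) ≤ (x / c) ^ (-t) :=
        Real.rpow_le_rpow_of_nonpos hxc (by rwa [div_le_iff₀' hc]) (neg_nonpos.mpr ht)
    _ = c ^ t * x ^ (-t) := by
        rw [Real.div_rpow hx.le hc.le, Real.rpow_neg hc.le, div_inv_eq_mul, mul_comm]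

lemma rpow_neg_mul_rpow_neg_le {a b β γ : ℝ} (ha : 0 < a) (hab : a ≤ b) (hγβ : γ ≤ β) :
    b ^ (-β) * a ^ (-γ) ≤ b ^ (-γ) * a ^ (-β) := by
  have hb : 0 < b := ha.trans_le hab
  have key : a ^ (β - γ) ≤ b ^ (β - γ) := Real.rpow_le_rpow ha.le hab (sub_nonneg.mpr hγβ)
  calc b ^ (-β) * a ^ (-γ) = b ^ (-β) * a ^ (-β) * a ^ (β - γ) := by
        rw [mul_assoc, ← Real.rpow_add ha]; ring_nf
    _ ≤ b ^ (-β) * a ^ (-β) * b ^ (β - γ) := by gcongr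
    _ = b ^ (-γ) * a ^ (-β) := by
        rw [mul_right_comm, ← Real.rpow_add hb]; ring_nf

lemma jap_rpow_neg_le_of_abs_le {x y t : ℝ} (ht : 0 ≤ t) (h : |x| ≤ 2 * |y|) :
    jap y ^ (-t) ≤ 2 ^ t * jap x ^ (-t) :=
  rpow_neg_le_rpow_mul_rpow_neg (jap_pos x) two_pos (jap_le_mul_jap one_le_two h) ht

lemma jap_rpow_mul_jap_rpow_le_of_abs_le {β γ u v : ℝ} (hγ : 0 ≤ γ) (h : |u| ≤ 2 * |v|) :
    jap u ^ (-β) * jap v ^ (-γ) ≤ 2 ^ γ * jap u ^ (-(β + γ)) :=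
  calc jap u ^ (-β) * jap v ^ (-γ) ≤ jap u ^ (-β) * (2 ^ γ * jap u ^ (-γ)) :=
        mul_le_mul_of_nonneg_left (jap_rpow_neg_le_of_abs_le hγ h)
          (Real.rpow_nonneg (jap_pos u).le _)
    _ = 2 ^ γ * jap u ^ (-(β + γ)) := by rw [neg_add, Real.rpow_add (jap_pos u)]; ring

lemma jap_rpow_mul_jap_rpow_le {β γ u v R : ℝ} (hγ : 0 ≤ γ) (hγβ : γ ≤ β)
    (hR : 2 * |v - u| ≤ R) :
    jap u ^ (-β) * jap v ^ (-γ) ≤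
      2 ^ β * (jap (v - u) ^ (-γ) * ((Icc (-R) R).indicator (fun y => jap y ^ (-β)) u +
        (Icc (-R) R).indicator (fun y => jap y ^ (-β)) v) +
        (Icc (-R) R)ᶜ.indicator (fun y => jap y ^ (-(β + γ))) u) := by
  set d := v - u
  have hduv : |d| ≤ |u| + |v| := by linarith [abs_sub v u]
  have hud : |u| ≤ |v| + |d| := by linarith [abs_sub_abs_le_abs_sub u v, abs_sub_comm u v]
  have hnn : ∀ s y : ℝ, 0 ≤ jap y ^ (-s) := fun s y => Real.rpow_nonneg (jap_pos y).le _
  have hind : ∀ (T : Set ℝ) (s y : ℝ), 0 ≤ T.indicator (fun y => jap y ^ (-s)) y :=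
    fun T s y => indicator_nonneg (fun y _ => hnn s y) y
  have h2γβ : (2 : ℝ) ^ γ ≤ 2 ^ β := Real.rpow_le_rpow_of_exponent_le one_le_two hγβ
  have hD := hnn γ d
  have hIv := hind (Icc (-R) R) β v
  have hIc := hind (Icc (-R) R)ᶜ (β + γ) u
  by_cases hu : |u| ≤ R
  · rw [indicator_of_mem (mem_Icc.mpr (abs_le.mp hu))]
    by_cases hv : |d| ≤ 2 * |v|
    · calc jap u ^ (-β) * jap v ^ (-γ) ≤ jap u ^ (-β) * (2 ^ γ * jap d ^ (-γ)) :=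
            mul_le_mul_of_nonneg_left (jap_rpow_neg_le_of_abs_le hγ hv) (hnn β u)
        _ ≤ 2 ^ β * (jap d ^ (-γ) * jap u ^ (-β)) := by
            rw [mul_left_comm, mul_comm (jap u ^ (-β))]
            exact mul_le_mul_of_nonneg_right h2γβ (mul_nonneg hD (hnn β u))
        _ ≤ _ := by gcongr; nlinarith [mul_nonneg hD hIv]
    · have hP := jap_rpow_neg_le_of_abs_le (hγ.trans hγβ) (by linarith : |d| ≤ 2 * |u|)
      have hvd : jap v ≤ jap d := by
        simpa using jap_le_mul_jap le_rfl (by linarith : |v| ≤ 1 * |d|)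
      rw [indicator_of_mem (mem_Icc.mpr (abs_le.mp (by linarith [abs_nonneg d] : |v| ≤ R)))]
      calc jap u ^ (-β) * jap v ^ (-γ) ≤ 2 ^ β * (jap d ^ (-β) * jap v ^ (-γ)) := by
            rw [← mul_assoc]; exact mul_le_mul_of_nonneg_right hP (hnn γ v)
        _ ≤ 2 ^ β * (jap d ^ (-γ) * jap v ^ (-β)) := by
            gcongr 2 ^ β * ?_; exact rpow_neg_mul_rpow_neg_le (jap_pos v) hvd hγβ
        _ ≤ _ := by gcongr; nlinarith [mul_nonneg hD (hnn β u)]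
  · have hu' : u ∉ Icc (-R) R := fun h => hu (abs_le.mpr h)
    rw [indicator_of_notMem hu', indicator_of_mem (mem_compl hu')]
    calc jap u ^ (-β) * jap v ^ (-γ) ≤ 2 ^ γ * jap u ^ (-(β + γ)) :=
          jap_rpow_mul_jap_rpow_le_of_abs_le hγ (by linarith)
      _ ≤ 2 ^ β * jap u ^ (-(β + γ)) := mul_le_mul_of_nonneg_right h2γβ (hnn _ u)
      _ ≤ _ := by gcongr; nlinarith [mul_nonneg hD hIv]

lemma jap_rpow_neg_le_two_rpow_mul {s : ℝ} (hs : 0 ≤ s) (y : ℝ) :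
    jap y ^ (-s) ≤ 2 ^ s * (1 + |y|) ^ (-s) :=
  rpow_neg_le_rpow_mul_rpow_neg (by positivity) two_pos
    (by linarith [one_le_jap y, abs_le_jap y]) hs

lemma continuous_jap_rpow_neg (s : ℝ) : Continuous fun y => jap y ^ (-s) :=
  (continuous_const.add (continuous_pow 2)).sqrt.rpow_const fun y => Or.inl (jap_pos y).ne'

lemma integrable_jap_rpow_neg {σ : ℝ} (hσ : 1 < σ) : Integrable fun y => jap y ^ (-σ) := by
  refine ((integrable_one_add_norm (E := ℝ) (μ := volume) (r := σ) (by simpa using hσ)).const_mul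
    (2 ^ σ)).mono' ?_ (ae_of_all _ fun y => ?_)
  · exact (continuous_jap_rpow_neg σ).aestronglyMeasurable
  · rw [Real.norm_of_nonneg (Real.rpow_nonneg (jap_pos y).le _), Real.norm_eq_abs]
    exact jap_rpow_neg_le_two_rpow_mul (by linarith) y

lemma integral_eq_two_mul_integral_Ioi_of_even {G : ℝ → ℝ} (hG : ∀ x, G (-x) = G x) :
    ∫ x, G x = 2 * ∫ x in Ioi 0, G x := by
  rw [← integral_comp_abs]
  congr 1 with x
  rcases abs_choice x with h | h <;> simp only [h, hG]

lemma setIntegral_Icc_eq_two_mul_of_even {G : ℝ → ℝ} (hG : ∀ x, G (-x) = G x) {R : ℝ}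
    (hR : 0 ≤ R) : ∫ x in Icc (-R) R, G x = 2 * ∫ x in (0)..R, G x := by
  have hGS : ∀ x, (Icc (-R) R).indicator G (-x) = (Icc (-R) R).indicator G x := fun x => by
    simp only [indicator, mem_Icc, hG, neg_le_neg_iff, neg_le, and_comm]
  rw [← integral_indicator measurableSet_Icc, integral_eq_two_mul_integral_Ioi_of_even hGS,
    setIntegral_indicator measurableSet_Icc, intervalIntegral.integral_of_le hR]
  congr 3
  ext x
  simp only [mem_inter_iff, mem_Ioi, mem_Icc, mem_Ioc]
  exact ⟨fun ⟨h₁, _, h₃⟩ => ⟨h₁, h₃⟩, fun ⟨h₁, h₂⟩ => ⟨h₁, by linarith, h₂⟩⟩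

lemma setIntegral_compl_Icc_eq_two_mul_of_even {G : ℝ → ℝ} (hG : ∀ x, G (-x) = G x) {R : ℝ}
    (hR : 0 ≤ R) : ∫ x in (Icc (-R) R)ᶜ, G x = 2 * ∫ x in Ioi R, G x := by
  have hGS : ∀ x, (Icc (-R) R)ᶜ.indicator G (-x) = (Icc (-R) R)ᶜ.indicator G x := fun x => by
    simp only [indicator, mem_compl_iff, mem_Icc, hG, neg_le_neg_iff, neg_le, and_comm]
  rw [← integral_indicator measurableSet_Icc.compl, integral_eq_two_mul_integral_Ioi_of_even hGS,
    setIntegral_indicator measurableSet_Icc.compl]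
  congr 3
  ext x
  simp only [mem_inter_iff, mem_Ioi, mem_compl_iff, mem_Icc, not_and_or, not_le]
  constructor
  · rintro ⟨h₀, h | h⟩ <;> linarith
  · exact fun h => ⟨by linarith, Or.inr h⟩

/-- `phi β ⟨a⟩` is the factor `φ_β(a)` of the estimate. -/
def phi (s J : ℝ) : ℝ :=
  if 1 < s then 1 else if s = 1 then Real.log (1 + J) else J ^ (1 - s)

lemma rpow_one_sub_le_two_mul_phi (s : ℝ) {J : ℝ} (hJ : 1 ≤ J) : J ^ (1 - s) ≤ 2 * phi s J := by
  unfold phi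
  split_ifs with hs₁ hs₂
  · linarith [Real.rpow_le_one_of_one_le_of_nonpos hJ (by linarith : 1 - s ≤ 0)]
  · rw [hs₂, sub_self, Real.rpow_zero]
    have := Real.log_two_gt_d9
    have : Real.log 2 ≤ Real.log (1 + J) := Real.log_le_log two_pos (by linarith)
    linarith
  · linarith [Real.rpow_pos_of_pos (by linarith : 0 < J) (1 - s)]

lemma phi_le_mul_phi {s k J J' : ℝ} (hs : 0 ≤ s) (hk : 1 ≤ k) (hJ : 1 ≤ J) (hJ' : 0 ≤ J')
    (h : J' ≤ k * J) : phi s J' ≤ k * phi s J := by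
  unfold phi
  split_ifs with hs₁ hs₂
  · linarith
  · calc Real.log (1 + J') ≤ Real.log ((1 + J) ^ k) :=
          Real.log_le_log (by linarith) (by
            nlinarith [one_add_mul_self_le_rpow_one_add (by linarith : (-1 : ℝ) ≤ J) hk])
      _ = k * Real.log (1 + J) := Real.log_rpow (by linarith) k
  · calc J' ^ (1 - s) ≤ (k * J) ^ (1 - s) := by gcongr; linarith [not_lt.mp hs₁]
      _ = k ^ (1 - s) * J ^ (1 - s) := Real.mul_rpow (by linarith) (by linarith)
      _ ≤ k * J ^ (1 - s) := by
          gcongr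
          exact Real.rpow_le_self_of_one_le hk (by linarith)

lemma integral_rpow_neg_le_phi (s : ℝ) :
    ∃ C, 0 < C ∧ ∀ T, 1 ≤ T → ∫ t in (1)..T, t ^ (-s) ≤ C * phi s T := by
  rcases eq_or_ne s 1 with rfl | hs
  · refine ⟨1, one_pos, fun T hT => ?_⟩
    have h0 : (0 : ℝ) ∉ uIcc 1 T := by rw [uIcc_of_le hT]; exact fun h => by linarith [h.1]
    simp only [phi, lt_irrefl, if_false, if_true, one_mul, Real.rpow_neg_one, integral_inv h0,
      div_one]
    exact Real.log_le_log (by linarith) (by linarith)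
  have h0 : ∀ T, 1 ≤ T → (0 : ℝ) ∉ uIcc 1 T := fun T hT h => by
    rw [uIcc_of_le hT] at h; linarith [h.1]
  have hint : ∀ T, 1 ≤ T → ∫ t in (1)..T, t ^ (-s) = (T ^ (1 - s) - 1) / (1 - s) := fun T hT => by
    rw [integral_rpow (Or.inr ⟨by contrapose! hs; linarith, h0 T hT⟩), Real.one_rpow]
    ring_nf
  rcases lt_or_gt_of_ne hs with hs | hs
  · refine ⟨1 / (1 - s), by bound, fun T hT => ?_⟩
    simp only [phi, if_neg (not_lt.mpr hs.le), if_neg hs.ne, hint T hT]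
    rw [one_div_mul_eq_div]
    gcongr
    linarith
  · refine ⟨1 / (s - 1), by bound, fun T hT => ?_⟩
    simp only [phi, if_pos hs, hint T hT, mul_one]
    rw [← neg_div_neg_eq, neg_sub, neg_sub]
    gcongr
    linarith [Real.rpow_nonneg (by linarith : (0:ℝ) ≤ T) (1 - s)]

lemma setIntegral_Icc_jap_rpow_neg_le {s : ℝ} (hs : 0 ≤ s) :
    ∃ C, 0 < C ∧ ∀ R, 0 ≤ R → ∫ y in Icc (-R) R, jap y ^ (-s) ≤ C * phi s (R + 1) := by
  obtain ⟨C, hC, hphi⟩ := integral_rpow_neg_le_phi s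
  refine ⟨2 * 2 ^ s * C, by positivity, fun R hR => ?_⟩
  have hcmp : ∫ y in (0)..R, jap y ^ (-s) ≤ ∫ y in (0)..R, 2 ^ s * (y + 1) ^ (-s) := by
    refine intervalIntegral.integral_mono_on hR ?_ ?_ fun y hy => ?_
    · exact (continuous_jap_rpow_neg s).intervalIntegrable 0 R
    · refine (continuousOn_const.mul ((continuousOn_id.add continuousOn_const).rpow_const
        fun y hy => Or.inl ?_)).intervalIntegrable
      rw [uIcc_of_le hR] at hy
      exact (by linarith [hy.1] : (0 : ℝ) < y + 1).ne'
    · simpa [abs_of_nonneg hy.1, add_comm] using jap_rpow_neg_le_two_rpow_mul hs y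
  have hshift : ∫ y in (0)..R, 2 ^ s * (y + 1) ^ (-s) = 2 ^ s * ∫ t in (1)..R + 1, t ^ (-s) := by
    rw [intervalIntegral.integral_const_mul,
      intervalIntegral.integral_comp_add_right (fun t => t ^ (-s)), zero_add]
  calc ∫ y in Icc (-R) R, jap y ^ (-s) = 2 * ∫ y in (0)..R, jap y ^ (-s) :=
        setIntegral_Icc_eq_two_mul_of_even (fun y => by rw [jap_neg]) hR
    _ ≤ 2 * (2 ^ s * ∫ t in (1)..R + 1, t ^ (-s)) := by rw [← hshift]; gcongr
    _ ≤ 2 * (2 ^ s * (C * phi s (R + 1))) := by gcongr; exact hphi _ (by linarith)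
    _ = 2 * 2 ^ s * C * phi s (R + 1) := by ring

lemma setIntegral_Ioi_add_one_rpow_neg {σ R : ℝ} (hσ : 1 < σ) (hR : 0 ≤ R) :
    ∫ y in Ioi R, (y + 1) ^ (-σ) = (R + 1) ^ (1 - σ) / (σ - 1) := by
  have := (measurePreserving_add_right volume (1 : ℝ)).setIntegral_preimage_emb
    (measurableEmbedding_addRight 1) (fun t => t ^ (-σ)) (Ioi (R + 1))
  rw [preimage_add_const_Ioi, add_sub_cancel_right] at this
  rw [this, integral_Ioi_rpow_of_lt (by linarith) (by linarith), neg_div, ← div_neg, neg_add',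
    neg_neg, neg_add_eq_sub]

lemma setIntegral_compl_Icc_jap_rpow_neg_le {σ R : ℝ} (hσ : 1 < σ) (hR : 0 ≤ R) :
    ∫ y in (Icc (-R) R)ᶜ, jap y ^ (-σ) ≤ 2 * 2 ^ σ / (σ - 1) * (R + 1) ^ (1 - σ) := by
  calc ∫ y in (Icc (-R) R)ᶜ, jap y ^ (-σ) = 2 * ∫ y in Ioi R, jap y ^ (-σ) :=
        setIntegral_compl_Icc_eq_two_mul_of_even (fun y => by rw [jap_neg]) hR
    _ ≤ 2 * ∫ y in Ioi R, 2 ^ σ * (y + 1) ^ (-σ) := by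
        refine mul_le_mul_of_nonneg_left (integral_mono_of_nonneg ?_ ?_ ?_) two_pos.le
        · exact ae_of_all _ fun y => Real.rpow_nonneg (jap_pos y).le _
        · exact (integrableOn_add_rpow_Ioi_of_lt (by linarith) (by linarith)).const_mul _
        · refine (ae_restrict_iff' measurableSet_Ioi).mpr (ae_of_all _ fun y hy => ?_)
          simpa [abs_of_nonneg (hR.trans hy.le), add_comm] using
            jap_rpow_neg_le_two_rpow_mul (by linarith) y
    _ = 2 * 2 ^ σ / (σ - 1) * (R + 1) ^ (1 - σ) := by
        rw [integral_const_mul, setIntegral_Ioi_add_one_rpow_neg hσ hR]; ring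

lemma lintegral_ofReal_le_ofReal_integral {α : Type*} [MeasurableSpace α] {μ : Measure α}
    {f g : α → ℝ} (hg : Integrable g μ) (hg₀ : ∀ x, 0 ≤ g x) (hfg : ∀ x, f x ≤ g x) :
    ∫⁻ x, ENNReal.ofReal (f x) ∂μ ≤ ENNReal.ofReal (∫ x, g x ∂μ) := by
  rw [ofReal_integral_eq_lintegral_ofReal hg (ae_of_all _ hg₀)]
  exact lintegral_mono fun x => ENNReal.ofReal_le_ofReal (hfg x)

lemma rpow_one_sub_add_le_rpow_neg_mul_phi {β γ J T : ℝ} (hσ : 1 < β + γ) (hJ : 1 ≤ J)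
    (hJT : J ≤ T) : T ^ (1 - (β + γ)) ≤ J ^ (-γ) * (2 * phi β J) :=
  calc T ^ (1 - (β + γ)) ≤ J ^ (1 - (β + γ)) :=
        Real.rpow_le_rpow_of_nonpos (by linarith) hJT (by linarith)
    _ = J ^ (-γ) * J ^ (1 - β) := by rw [← Real.rpow_add (by linarith)]; congr 1; ring
    _ ≤ J ^ (-γ) * (2 * phi β J) := by gcongr; exact rpow_one_sub_le_two_mul_phi β hJ

lemma lintegral_jap_rpow_mul_jap_rpow_le {β γ R a₁ a₂ : ℝ} (hγ : 0 ≤ γ) (hγβ : γ ≤ β)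
    (hσ : 1 < β + γ) (hR : 2 * |a₁ - a₂| ≤ R) :
    ∫⁻ x, ENNReal.ofReal (jap (x - a₁) ^ (-β) * jap (x - a₂) ^ (-γ)) ≤
      ENNReal.ofReal (2 ^ β * (jap (a₁ - a₂) ^ (-γ) * (2 * ∫ y in Icc (-R) R, jap y ^ (-β)) +
        ∫ y in (Icc (-R) R)ᶜ, jap y ^ (-(β + γ)))) := by
  set p := (Icc (-R) R).indicator fun y => jap y ^ (-β)
  set q := (Icc (-R) R)ᶜ.indicator fun y => jap y ^ (-(β + γ))
  have hp : Integrable p :=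
    (continuous_jap_rpow_neg β).integrableOn_Icc.integrable_indicator measurableSet_Icc
  have hp₁ : Integrable fun x => p (x - a₁) := hp.comp_sub_right a₁
  have hp₂ : Integrable fun x => p (x - a₂) := hp.comp_sub_right a₂
  have hq₁ : Integrable fun x => q (x - a₁) :=
    ((integrable_jap_rpow_neg hσ).indicator measurableSet_Icc.compl).comp_sub_right a₁
  have hp₀ : ∀ y, 0 ≤ p y := indicator_nonneg fun y _ => Real.rpow_nonneg (jap_pos y).le _
  have hq₀ : ∀ y, 0 ≤ q y := indicator_nonneg fun y _ => Real.rpow_nonneg (jap_pos y).le _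
  have hD : 0 ≤ jap (a₁ - a₂) ^ (-γ) := Real.rpow_nonneg (jap_pos _).le _
  calc ∫⁻ x, ENNReal.ofReal (jap (x - a₁) ^ (-β) * jap (x - a₂) ^ (-γ))
      ≤ ENNReal.ofReal (∫ x, 2 ^ β *
          (jap (a₁ - a₂) ^ (-γ) * (p (x - a₁) + p (x - a₂)) + q (x - a₁))) := by
        refine lintegral_ofReal_le_ofReal_integral
          ((((hp₁.add hp₂).const_mul _).add hq₁).const_mul _)
          (fun x => mul_nonneg (by positivity)
            (add_nonneg (mul_nonneg hD (add_nonneg (hp₀ _) (hp₀ _))) (hq₀ _))) (fun x => ?_)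
        have := jap_rpow_mul_jap_rpow_le (u := x - a₁) (v := x - a₂) (R := R) hγ hγβ
          (by rwa [sub_sub_sub_cancel_left])
        rwa [sub_sub_sub_cancel_left] at this
    _ = _ := by
        rw [integral_const_mul, integral_add, integral_const_mul, integral_add,
          integral_sub_right_eq_self, integral_sub_right_eq_self, integral_sub_right_eq_self,
          integral_indicator measurableSet_Icc, integral_indicator measurableSet_Icc.compl, two_mul]
        exacts [hp₁, hp₂, (hp₁.add hp₂).const_mul _, hq₁]

/-- Convolution integral estimate: if `β ≥ γ ≥ 0` and `β + γ > 1`, then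
`∫ ⟨x-a₁⟩^{-β} ⟨x-a₂⟩^{-γ} dx ≤ C ⟨a₁-a₂⟩^{-γ} φ_β(a₁-a₂)`, where `φ_β(a) = 1` if `β > 1`,
`log(1+⟨a⟩)` if `β = 1`, and `⟨a⟩^{1-β}` if `β < 1`. -/
theorem statement_18 (β γ : ℝ) (hγ : 0 ≤ γ) (hβγ : γ ≤ β) (hsum : 1 < β + γ) :
    ∃ C : ℝ, 0 < C ∧ ∀ a₁ a₂ : ℝ,
      (∫⁻ x : ℝ, ENNReal.ofReal (jap (x - a₁) ^ (-β) * jap (x - a₂) ^ (-γ)))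
        ≤ ENNReal.ofReal
            (C * jap (a₁ - a₂) ^ (-γ) *
              (if 1 < β then 1
               else if β = 1 then Real.log (1 + jap (a₁ - a₂))
               else jap (a₁ - a₂) ^ (1 - β))) := by
  obtain ⟨C₀, hC₀, hnear⟩ := setIntegral_Icc_jap_rpow_neg_le (hγ.trans hβγ)
  set C₁ := 2 * 2 ^ (β + γ) / (β + γ - 1)
  refine ⟨2 ^ β * (6 * C₀ + 2 * C₁), by positivity, fun a₁ a₂ => ?_⟩
  set J := jap (a₁ - a₂)
  set R := 2 * |a₁ - a₂|
  have hJ : 1 ≤ J := one_le_jap _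
  have hR : 0 ≤ R := by positivity
  have hJR : J ≤ R + 1 := by linarith [jap_le_one_add_abs (a₁ - a₂), abs_nonneg (a₁ - a₂)]
  have hRJ : R + 1 ≤ 3 * J := by linarith [abs_le_jap (a₁ - a₂)]
  have hnear' : ∫ y in Icc (-R) R, jap y ^ (-β) ≤ C₀ * (3 * phi β J) :=
    (hnear R hR).trans <| by
      gcongr; exact phi_le_mul_phi (hγ.trans hβγ) (by norm_num) hJ (by linarith) hRJ
  have hfar : ∫ y in (Icc (-R) R)ᶜ, jap y ^ (-(β + γ)) ≤ C₁ * (J ^ (-γ) * (2 * phi β J)) :=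
    (setIntegral_compl_Icc_jap_rpow_neg_le hsum hR).trans <| by
      gcongr; exact rpow_one_sub_add_le_rpow_neg_mul_phi hsum hJ hJR
  have hD : 0 ≤ J ^ (-γ) := Real.rpow_nonneg (jap_pos _).le _
  calc _ ≤ ENNReal.ofReal (2 ^ β * (J ^ (-γ) * (2 * ∫ y in Icc (-R) R, jap y ^ (-β)) +
          ∫ y in (Icc (-R) R)ᶜ, jap y ^ (-(β + γ)))) :=
        lintegral_jap_rpow_mul_jap_rpow_le hγ hβγ hsum le_rfl
    _ ≤ ENNReal.ofReal (2 ^ β * ((6 * C₀ + 2 * C₁) * J ^ (-γ) * phi β J)) := by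
        gcongr
        nlinarith
    _ = _ := by simp only [phi, mul_assoc]
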